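/- arXiv:2404.07599 — 3 statements merged into one kernel-verified Lean document; each statement's English description precedes it below -/
import Mathlib

section
/- For every nontrivial real Banach space X (pointed at its origin), the set (Der(X) \ SNA(X)) ∪ {0} contains an isometric copy of c₀: there exists a linear map T : c₀ → Lip₀(X) such that ‖T a‖ = ‖a‖_∞ for every a ∈ c₀, and for every nonzero a ∈ c₀ the function T a attains its norm through a derivative but does not strongly attain its norm. -/
open Filter Set
open scoped ZeroAtInfty ENNReal NNReal

/-- The optimal Lipschitz constant (Lipschitz norm) of `f : M → ℝ`. -/
noncomputable def lipNorm {M : Type*} [MetricSpace M] (f : M → ℝ) : ℝ :=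
  sSup {r : ℝ | ∃ p q : M, p ≠ q ∧ r = |f p - f q| / dist p q}

/-- `f` belongs to `Lip₀(M)`: it is Lipschitz and vanishes at the base point. -/
def MemLip0 {M : Type*} [MetricSpace M] (base : M) (f : M → ℝ) : Prop :=
  f base = 0 ∧ ∃ K : ℝ≥0, LipschitzWith K f

/-- `f` strongly attains its (Lipschitz) norm. -/
def StronglyAttains {M : Type*} [MetricSpace M] (f : M → ℝ) : Prop :=
  ∃ p q : M, p ≠ q ∧ |f p - f q| = lipNorm f * dist p q

/-- `f` attains its pointwise norm. -/
def PointwiseAttains {M : Type*} [MetricSpace M] (f : M → ℝ) : Prop :=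
  ∃ p : M, sSup {r : ℝ | ∃ q : M, q ≠ p ∧ r = |f p - f q| / dist p q} = lipNorm f

/-- `f` attains its norm through a derivative: for some `x` and unit direction `e`, the
two-sided directional derivative exists and has modulus `‖f‖`. -/
def DerAttains {X : Type*} [NormedAddCommGroup X] [NormedSpace ℝ X] (f : X → ℝ) : Prop :=
  ∃ x e : X, ‖e‖ = 1 ∧ ∃ L : ℝ,
    Filter.Tendsto (fun t : ℝ => (f (x + t • e) - f x) / t)
      (nhdsWithin (0 : ℝ) {(0 : ℝ)}ᶜ) (nhds L) ∧
    |L| = lipNorm f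

/-- `f` attains its norm locally directionally at a point `x̄` in the direction `u`
toward `z`. -/
def LocDirAttains {X : Type*} [NormedAddCommGroup X] [NormedSpace ℝ X] (f : X → ℝ) : Prop :=
  ∃ (xbar u : X) (z : ℝ), ‖u‖ = 1 ∧ |z| = lipNorm f ∧
    ∃ p q : ℕ → X, (∀ n, p n ≠ q n) ∧
      Filter.Tendsto (fun n => (f (q n) - f (p n)) / ‖q n - p n‖) Filter.atTop (nhds z) ∧
      Filter.Tendsto (fun n => ‖p n - q n‖⁻¹ • (p n - q n)) Filter.atTop (nhds u) ∧
      Filter.Tendsto p Filter.atTop (nhds xbar) ∧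
      Filter.Tendsto q Filter.atTop (nhds xbar)

open Topology

/-! Fix a unit vector `e` and a functional `g` of norm one with `g e = 1`. On each cell
`[k, k + 1]` of the real line place a bump of height `a k` whose secant slopes are all strictly
below one in modulus but whose derivative at `k + 1/4` is exactly one, and let `T a` be this train
of bumps composed with `g`. Every difference quotient of `T a` is then strictly smaller than
`‖a‖`, so the norm is never strongly attained; but `|a k| = ‖a‖` for some `k` because `a` tends
to zero, and there the derivative of `T a` in direction `e` is `a k`, so `‖T a‖ = ‖a‖` is
attained through a derivative. -/

/-- `2 x²` glued at `1/4` to its reflection through `(1/4, 1/8)`: the slope reaches one only at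
`1/4`, which makes every secant slope on `[0, 1/2]` strictly smaller than one. -/
noncomputable def halfBump (x : ℝ) : ℝ :=
  if x ≤ 1/4 then 2 * x ^ 2 else 2 * x - 2 * x ^ 2 - 1/4

lemma abs_halfBump_sub_lt {x y : ℝ} (hx : x ∈ Icc (0 : ℝ) (1/2))
    (hy : y ∈ Icc (0 : ℝ) (1/2)) (hxy : x ≠ y) : |halfBump x - halfBump y| < |x - y| := by
  wlog h : x < y generalizing x y
  · rw [abs_sub_comm, abs_sub_comm x]
    exact this hy hx hxy.symm (hxy.lt_or_gt.resolve_left h)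
  rw [abs_sub_comm x, abs_of_pos (sub_pos.2 h), abs_sub_lt_iff]
  obtain ⟨hx0, -⟩ := hx
  obtain ⟨-, hy1⟩ := hy
  unfold halfBump
  split_ifs <;> constructor <;> nlinarith

lemma hasDerivAt_halfBump : HasDerivAt halfBump 1 (1/4) := by
  have hleft : HasDerivWithinAt halfBump 1 (Iic (1/4)) (1/4) := by
    have : HasDerivAt (fun x : ℝ => 2 * x ^ 2) 1 (1/4) :=
      ((hasDerivAt_pow 2 (1/4 : ℝ)).const_mul 2).congr_deriv (by norm_num)
    exact this.hasDerivWithinAt.congr (fun x hx => if_pos hx) (if_pos le_rfl)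
  have hright : HasDerivWithinAt halfBump 1 (Ici (1/4)) (1/4) := by
    have : HasDerivAt (fun x : ℝ => 2 * x - 2 * x ^ 2 - 1/4) 1 (1/4) :=
      ((((hasDerivAt_id' (1/4 : ℝ)).const_mul 2).sub
        ((hasDerivAt_pow 2 (1/4 : ℝ)).const_mul 2)).sub_const (1/4)).congr_deriv
        (by norm_num)
    refine this.hasDerivWithinAt.congr (fun x hx => ?_) (by norm_num [halfBump])
    rcases (mem_Ici.1 hx).eq_or_lt with rfl | hlt
    · norm_num [halfBump]
    · exact if_neg hlt.not_ge
  simpa using hleft.union hright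

noncomputable def tent (t : ℝ) : ℝ := max 0 (min t (1 - t))

lemma tent_mem_Icc (t : ℝ) : tent t ∈ Icc (0 : ℝ) (1/2) :=
  ⟨le_max_left _ _, max_le (by norm_num) (by rw [min_le_iff]; by_contra! h; linarith)⟩

lemma lipschitzWith_one_tent : LipschitzWith 1 tent := by
  have h :=
    (LipschitzWith.id.min (IsometryEquiv.subLeft (1 : ℝ)).isometry.lipschitz).const_max 0
  rwa [max_self] at h

noncomputable def bump (t : ℝ) : ℝ := halfBump (tent t)

lemma bump_zero : bump 0 = 0 := by norm_num [bump, tent, halfBump]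

lemma bump_one : bump 1 = 0 := by norm_num [bump, tent, halfBump]

lemma abs_bump_sub_lt {s t : ℝ} (hst : s ≠ t) : |bump s - bump t| < |s - t| := by
  rcases eq_or_ne (tent s) (tent t) with h | h
  · simpa [bump, h, sub_eq_zero] using hst
  · calc |bump s - bump t| < |tent s - tent t| :=
          abs_halfBump_sub_lt (tent_mem_Icc s) (tent_mem_Icc t) h
      _ ≤ |s - t| := by simpa [Real.dist_eq] using lipschitzWith_one_tent.dist_le_mul s t

lemma hasDerivAt_bump : HasDerivAt bump 1 (1/4) := by
  refine hasDerivAt_halfBump.congr_of_eventuallyEq ?_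
  filter_upwards [Ioo_mem_nhds (show (0 : ℝ) < 1/4 by norm_num)
    (show (1/4 : ℝ) < 1/2 by norm_num)] with t ht
  rw [bump, tent, min_eq_left (by linarith [ht.2]), max_eq_right ht.1.le]

noncomputable def bumpTrain : (ℤ → ℝ) →ₗ[ℝ] ℝ → ℝ where
  toFun b t := b ⌊t⌋ * bump (t - ⌊t⌋)
  map_add' b c := by ext t; simp [add_mul]
  map_smul' r b := by ext t; simp [mul_assoc]

lemma bumpTrain_apply (b : ℤ → ℝ) (t : ℝ) : bumpTrain b t = b ⌊t⌋ * bump (t - ⌊t⌋) := rfl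

lemma bumpTrain_intCast (b : ℤ → ℝ) (k : ℤ) : bumpTrain b k = 0 := by
  simp [bumpTrain_apply, bump_zero]

lemma bumpTrain_eq_of_mem_Icc (b : ℤ → ℝ) {k : ℤ} {t : ℝ} (ht : t ∈ Icc (k : ℝ) (k + 1)) :
    bumpTrain b t = b k * bump (t - k) := by
  rcases ht.2.eq_or_lt with rfl | hlt
  · exact_mod_cast (bumpTrain_intCast b (k + 1)).trans (by simp [bump_one])
  · rw [bumpTrain_apply, Int.floor_eq_iff.2 ⟨ht.1, hlt⟩]

section Estimates

variable {b : ℤ → ℝ} {M : ℝ}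

lemma abs_bumpTrain_sub_lt_of_mem_Icc (hM : 0 < M) {k : ℤ} (hk : |b k| ≤ M) {s t : ℝ}
    (hs : s ∈ Icc (k : ℝ) (k + 1)) (ht : t ∈ Icc (k : ℝ) (k + 1)) (hst : s ≠ t) :
    |bumpTrain b s - bumpTrain b t| < M * |s - t| := by
  rw [bumpTrain_eq_of_mem_Icc b hs, bumpTrain_eq_of_mem_Icc b ht, ← mul_sub, abs_mul]
  calc |b k| * |bump (s - k) - bump (t - k)| ≤ M * |bump (s - k) - bump (t - k)| := by gcongr
    _ < M * |s - t| := by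
      have := abs_bump_sub_lt (sub_left_injective.ne hst : s - k ≠ t - k)
      rw [sub_sub_sub_cancel_right] at this
      gcongr

/-- Across cells, route through the integers between `s` and `t`, where the train vanishes. -/
lemma abs_bumpTrain_sub_lt (hM : 0 < M) (hb : ∀ k, |b k| ≤ M) {s t : ℝ} (hst : s ≠ t) :
    |bumpTrain b s - bumpTrain b t| < M * |s - t| := by
  wlog h : s < t generalizing s t
  · rw [abs_sub_comm, abs_sub_comm s]
    exact this hst.symm (hst.lt_or_gt.resolve_left h)
  have cell (x : ℝ) : x ∈ Icc (⌊x⌋ : ℝ) (⌊x⌋ + 1) :=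
    ⟨Int.floor_le x, (Int.lt_floor_add_one x).le⟩
  rcases (Int.floor_mono h.le).eq_or_lt with hk | hk
  · exact abs_bumpTrain_sub_lt_of_mem_Icc hM (hb _) (cell s) (hk ▸ cell t) hst
  set k := ⌊s⌋
  set m := ⌊t⌋
  have hkm : (k : ℝ) + 1 ≤ m := by exact_mod_cast hk
  have hs : s < k + 1 := Int.lt_floor_add_one s
  have ht : (m : ℝ) ≤ t := Int.floor_le t
  have hright : |bumpTrain b t - bumpTrain b m| ≤ M * |t - m| := by
    rcases eq_or_ne t m with htm | htm
    · simp [htm]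
    · exact (abs_bumpTrain_sub_lt_of_mem_Icc hM (hb m) (cell t) ⟨le_rfl, by linarith⟩ htm).le
  have hleft : |bumpTrain b (k + 1 : ℤ) - bumpTrain b s| < M * |(k + 1 : ℤ) - s| := by
    push_cast
    exact abs_bumpTrain_sub_lt_of_mem_Icc hM (hb k) ⟨by linarith, le_rfl⟩ (cell s) hs.ne'
  calc |bumpTrain b s - bumpTrain b t|
      = |(bumpTrain b t - bumpTrain b m) + (bumpTrain b (k + 1 : ℤ) - bumpTrain b s)| := by
        rw [bumpTrain_intCast, bumpTrain_intCast, abs_sub_comm]; ring_nf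
    _ < M * |t - m| + M * |(k + 1 : ℤ) - s| := (abs_add_le _ _).trans_lt (by linarith)
    _ ≤ M * |s - t| := by
      push_cast
      rw [abs_of_nonneg (sub_nonneg.2 ht), abs_of_pos (sub_pos.2 hs), abs_sub_comm,
        abs_of_pos (sub_pos.2 h)]
      nlinarith

lemma lipschitzWith_bumpTrain {K : ℝ≥0} (hb : ∀ k, |b k| ≤ K) :
    LipschitzWith K (bumpTrain b) := by
  rcases eq_zero_or_pos K with hK | hK
  · obtain rfl : b = 0 := funext fun k => abs_nonpos_iff.1 (by simpa [hK] using hb k)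
    rw [map_zero]
    exact LipschitzWith.const' 0
  refine LipschitzWith.of_dist_le_mul fun s t => ?_
  rcases eq_or_ne s t with rfl | hst
  · simp
  · simpa [Real.dist_eq] using (abs_bumpTrain_sub_lt hK hb hst).le

lemma hasDerivAt_bumpTrain (b : ℤ → ℝ) (k : ℤ) :
    HasDerivAt (bumpTrain b) (b k) (k + 1/4) := by
  have hshift : HasDerivAt (fun t => b k * bump (t - k)) (b k) (k + 1/4) := by
    refine ((HasDerivAt.comp_sub_const (k + 1/4 : ℝ) k ?_).const_mul (b k)).congr_deriv
      (mul_one _)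
    rw [add_sub_cancel_left]
    exact hasDerivAt_bump
  refine hshift.congr_of_eventuallyEq ?_
  filter_upwards [Icc_mem_nhds (show (k : ℝ) < k + 1/4 by linarith)
    (show (k : ℝ) + 1/4 < k + 1 by linarith)] with t ht
  exact bumpTrain_eq_of_mem_Icc b ht

end Estimates

section LipNorm

variable {X : Type*} [NormedAddCommGroup X] [NormedSpace ℝ X]

lemma LipschitzWith.abs_sub_div_dist_le {M : Type*} [MetricSpace M] {f : M → ℝ} {K : ℝ≥0}
    (hf : LipschitzWith K f) (p q : M) : |f p - f q| / dist p q ≤ K :=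
  div_le_of_le_mul₀ dist_nonneg K.2 (by simpa [Real.dist_eq] using hf.dist_le_mul p q)

lemma LipschitzWith.lipNorm_le {M : Type*} [MetricSpace M] {f : M → ℝ} {K : ℝ≥0}
    (hf : LipschitzWith K f) : lipNorm f ≤ K :=
  Real.sSup_le (by rintro _ ⟨p, q, -, rfl⟩; exact hf.abs_sub_div_dist_le p q) K.2

lemma LipschitzWith.abs_le_lipNorm_of_tendsto {f : X → ℝ} {K : ℝ≥0} (hf : LipschitzWith K f)
    {x e : X} (he : ‖e‖ = 1) {L : ℝ}
    (hL : Tendsto (fun t : ℝ => (f (x + t • e) - f x) / t) (𝓝[≠] 0) (𝓝 L)) :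
    |L| ≤ lipNorm f := by
  have hbdd : BddAbove {r : ℝ | ∃ p q : X, p ≠ q ∧ r = |f p - f q| / dist p q} :=
    ⟨K, by rintro _ ⟨p, q, -, rfl⟩; exact hf.abs_sub_div_dist_le p q⟩
  refine le_of_tendsto hL.abs (eventually_nhdsWithin_of_forall fun t (ht : t ≠ 0) => ?_)
  have hne : x + t • e ≠ x := ne_of_apply_ne (‖· - x‖) (by simp [norm_smul, he, ht])
  refine le_csSup hbdd ⟨x + t • e, x, hne, ?_⟩
  rw [dist_eq_norm, add_sub_cancel_left, norm_smul, he, mul_one, Real.norm_eq_abs, abs_div]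

lemma tendsto_slope_comp_of_hasDerivAt {F : ℝ → ℝ} {L : ℝ} (g : X →ₗ[ℝ] ℝ) {x e : X}
    (he : g e = 1) (hF : HasDerivAt F L (g x)) :
    Tendsto (fun t : ℝ => (F (g (x + t • e)) - F (g x)) / t) (𝓝[≠] 0) (𝓝 L) := by
  simpa [he, div_eq_inv_mul] using hF.tendsto_slope_zero

lemma abs_comp_sub_comp_lt_mul_dist {F : ℝ → ℝ} {M : ℝ} (hM : 0 < M)
    (hF : ∀ s t, s ≠ t → |F s - F t| < M * |s - t|) {g : X →L[ℝ] ℝ} (hg : ‖g‖ ≤ 1)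
    {p q : X} (hpq : p ≠ q) : |F (g p) - F (g q)| < M * dist p q := by
  rcases eq_or_ne (g p) (g q) with h | h
  · simpa [h] using mul_pos hM (dist_pos.2 hpq)
  calc |F (g p) - F (g q)| < M * |g p - g q| := hF _ _ h
    _ ≤ M * dist p q := by
      gcongr
      simpa [dist_eq_norm] using g.le_of_opNorm_le hg (p - q)

end LipNorm

namespace ZeroAtInftyContinuousMap

variable {α β : Type*} [TopologicalSpace α]

lemma norm_apply_le [SeminormedAddCommGroup β] (f : C₀(α, β)) (x : α) : ‖f x‖ ≤ ‖f‖ :=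
  norm_toBCF_eq_norm (f := f) ▸ f.toBCF.norm_coe_le_norm x

lemma exists_norm_apply_eq_norm [NormedAddCommGroup β] [Nonempty α] (f : C₀(α, β)) :
    ∃ x, ‖f x‖ = ‖f‖ := by
  suffices ∃ x, ∀ y, ‖f y‖ ≤ ‖f x‖ by
    obtain ⟨x, hx⟩ := this
    refine ⟨x, (f.norm_apply_le x).antisymm ?_⟩
    rw [← norm_toBCF_eq_norm]
    exact (BoundedContinuousFunction.norm_le (norm_nonneg _)).2 hx
  rcases eq_or_ne f 0 with rfl | hf
  · simp
  obtain ⟨x₀, hx₀⟩ := DFunLike.ne_iff.1 hf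
  have hsmall : ∀ᶠ x in cocompact α, ‖f x‖ < ‖f x₀‖ :=
    (zero_at_infty f).norm.eventually_lt_const (by simpa [norm_pos_iff] using hx₀)
  exact (map_continuous f).norm.exists_forall_ge' x₀ (hsmall.mono fun _ => le_of_lt)

end ZeroAtInftyContinuousMap

theorem c0_in_Der_not_SNA_general {X : Type*} [NormedAddCommGroup X] [NormedSpace ℝ X]
    [Nontrivial X] :
    ∃ T : C₀(ℕ, ℝ) →ₗ[ℝ] (X → ℝ),
      ∀ a : C₀(ℕ, ℝ),
        MemLip0 (0 : X) (T a) ∧ lipNorm (T a) = ‖a‖ ∧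
        (a ≠ 0 → DerAttains (T a) ∧ ¬ StronglyAttains (T a)) := by
  obtain ⟨e, he⟩ := exists_norm_eq X zero_le_one
  obtain ⟨g, hg, hge⟩ := exists_dual_vector ℝ e (by simp [he])
  rw [he] at hge
  -- negative cells reuse the height `a 0`
  let heights : C₀(ℕ, ℝ) →ₗ[ℝ] ℤ → ℝ :=
    { toFun a k := a k.toNat, map_add' _ _ := rfl, map_smul' _ _ := rfl }
  refine ⟨LinearMap.funLeft ℝ ℝ g ∘ₗ bumpTrain ∘ₗ heights, fun a => ?_⟩
  set f := bumpTrain (heights a) ∘ g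
  obtain ⟨N, hN⟩ := a.exists_norm_apply_eq_norm
  have hb (k : ℤ) : |heights a k| ≤ ‖a‖₊ := a.norm_apply_le k.toNat
  have hlip : LipschitzWith ‖a‖₊ f := by
    simpa [show ‖g‖₊ = 1 by ext; exact hg] using (lipschitzWith_bumpTrain hb).comp g.lipschitz
  have hderiv : HasDerivAt (bumpTrain (heights a)) (a N) (g (((N : ℝ) + 1/4) • e)) := by
    simpa [hge, heights] using hasDerivAt_bumpTrain (heights a) N
  have hslope := tendsto_slope_comp_of_hasDerivAt g.toLinearMap hge hderiv
  have haN : |a N| = ‖a‖ := hN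
  have hnorm : lipNorm f = ‖a‖ :=
    le_antisymm hlip.lipNorm_le (haN ▸ hlip.abs_le_lipNorm_of_tendsto he hslope)
  refine ⟨⟨by simpa using bumpTrain_intCast (heights a) 0, _, hlip⟩, hnorm,
    fun ha => ⟨⟨_, e, he, _, hslope, hnorm ▸ haN⟩, ?_⟩⟩
  rintro ⟨p, q, hpq, h⟩
  have hpos : 0 < ‖a‖ := norm_pos_iff.2 ha
  exact (abs_comp_sub_comp_lt_mul_dist hpos (fun _ _ => abs_bumpTrain_sub_lt hpos hb) hg.le hpq).ne
    (hnorm ▸ h)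

/-- For every nontrivial real Banach space `X`, the set `(Der(X) \ SNA(X)) ∪ {0}` contains
an isometric copy of `c₀`. -/
theorem c0_in_Der_not_SNA {X : Type*} [NormedAddCommGroup X] [NormedSpace ℝ X]
    [CompleteSpace X] [Nontrivial X] :
    ∃ T : C₀(ℕ, ℝ) →ₗ[ℝ] (X → ℝ),
      ∀ a : C₀(ℕ, ℝ),
        MemLip0 (0 : X) (T a) ∧ lipNorm (T a) = ‖a‖ ∧
        (a ≠ 0 → DerAttains (T a) ∧ ¬ StronglyAttains (T a)) :=
  c0_in_Der_not_SNA_general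
end

section
/- For every nontrivial real Banach space X (pointed at its origin), the set [Lip₀(X) \ (PNA(X) ∪ LDirA(X))] ∪ {0} contains an isometric copy of ℓ∞: there exists a linear map T : ℓ∞ → Lip₀(X) such that ‖T a‖ = ‖a‖_∞ for every a ∈ ℓ∞, and for every nonzero a ∈ ℓ∞, the function T a neither attains its pointwise norm nor attains its norm locally directionally. -/
open Filter Set
open scoped ZeroAtInfty ENNReal NNReal

/-!
Fix a unit vector `x₀` and a norm-one functional `φ` with `φ x₀ = 1`, and put `T a = g_a ∘ φ`.
As `s ↦ s • x₀` is an isometric section of the `1`-Lipschitz map `φ`, everything about `T a`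
reduces to `g_a : ℝ → ℝ`. This function is flat except on the unit intervals `[4ⁿ, 4ⁿ + 1]`, where
its slopes `a k · n / (n + 1)` stay below `‖a‖` in absolute value but approach every `|a k|`;
hence `‖g_a‖ = ‖a‖`. A difference quotient with one endpoint below `4ᴺ` sees slopes of size at
most `‖a‖ N / (N + 1)`, except on intervals so far out (they are spaced geometrically) that they
fill at most a fraction `(2/3) 4⁻ᴺ` of the distance. So near every point `g_a` is Lipschitz
against all other points with a constant strictly below `‖a‖`, which excludes both kinds of
attainment.
-/

open Finset Topology
open scoped lp

section LipNorm

variable {M N : Type*} [MetricSpace M] [MetricSpace N]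

lemma lipNorm_nonneg (f : M → ℝ) : 0 ≤ lipNorm f :=
  Real.sSup_nonneg fun _ ⟨_, _, _, hr⟩ => hr ▸ by positivity

lemma lipNorm_le {f : M → ℝ} {C : ℝ} (hC : 0 ≤ C) (h : ∀ p q, |f p - f q| ≤ C * dist p q) :
    lipNorm f ≤ C :=
  Real.sSup_le (fun _ ⟨p, q, hpq, hr⟩ => hr ▸ (div_le_iff₀ (dist_pos.2 hpq)).2 (h p q)) hC

lemma LipschitzWith.div_dist_le_lipNorm {f : M → ℝ} {K : ℝ≥0} (hf : LipschitzWith K f)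
    {p q : M} (hpq : p ≠ q) : |f p - f q| / dist p q ≤ lipNorm f := by
  refine le_csSup ⟨K, ?_⟩ ⟨p, q, hpq, rfl⟩
  rintro _ ⟨p', q', hpq', rfl⟩
  rw [div_le_iff₀ (dist_pos.2 hpq'), ← Real.dist_eq]
  exact hf.dist_le_mul p' q'

lemma LipschitzWith.abs_sub_le_lipNorm_mul {f : M → ℝ} {K : ℝ≥0} (hf : LipschitzWith K f)
    (p q : M) : |f p - f q| ≤ lipNorm f * dist p q := by
  rcases eq_or_ne p q with rfl | hpq
  · simp
  · exact (div_le_iff₀ (dist_pos.2 hpq)).1 (hf.div_dist_le_lipNorm hpq)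

lemma lipNorm_comp_eq {g : N → ℝ} {φ : M → N} {ι : N → M} {K : ℝ≥0} (hg : LipschitzWith K g)
    (hφ : LipschitzWith 1 φ) (hι : Isometry ι) (hφι : Function.LeftInverse φ ι) :
    lipNorm (g ∘ φ) = lipNorm g := by
  refine le_antisymm (lipNorm_le (lipNorm_nonneg g) fun p q => ?_) ?_
  · calc |g (φ p) - g (φ q)| ≤ lipNorm g * dist (φ p) (φ q) := hg.abs_sub_le_lipNorm_mul _ _
      _ ≤ lipNorm g * dist p q := by
        gcongr
        · exact lipNorm_nonneg g
        · simpa using hφ.dist_le_mul p q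
  · refine Real.sSup_le (fun _ ⟨s, t, hst, hr⟩ => ?_) (lipNorm_nonneg _)
    have hquot := (hg.comp hφ).div_dist_le_lipNorm (hι.injective.ne hst)
    rwa [Function.comp_apply, Function.comp_apply, hφι s, hφι t, hι.dist_eq, ← hr] at hquot

def LocallyBelowLipNorm (f : M → ℝ) : Prop :=
  ∀ x, ∃ K ∈ Set.Ico 0 (lipNorm f), ∀ᶠ p in 𝓝 x, ∀ q, |f p - f q| ≤ K * dist p q

lemma LocallyBelowLipNorm.comp {g : N → ℝ} {φ : M → N} (hg : LocallyBelowLipNorm g)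
    (hφ : LipschitzWith 1 φ) (hgφ : lipNorm (g ∘ φ) = lipNorm g) :
    LocallyBelowLipNorm (g ∘ φ) := by
  intro x
  obtain ⟨K, ⟨hK0, hK⟩, hnear⟩ := hg (φ x)
  refine ⟨K, ⟨hK0, hgφ ▸ hK⟩, ?_⟩
  filter_upwards [hφ.continuous.continuousAt.eventually hnear] with p hp q
  calc |g (φ p) - g (φ q)| ≤ K * dist (φ p) (φ q) := hp (φ q)
    _ ≤ K * dist p q := by gcongr; simpa using hφ.dist_le_mul p q

lemma LocallyBelowLipNorm.not_pointwiseAttains {f : M → ℝ} (hf : LocallyBelowLipNorm f) :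
    ¬ PointwiseAttains f := by
  rintro ⟨p, hp⟩
  obtain ⟨K, ⟨hK0, hK⟩, hnear⟩ := hf p
  have hsup : sSup {r : ℝ | ∃ q : M, q ≠ p ∧ r = |f p - f q| / dist p q} ≤ K :=
    Real.sSup_le (fun _ ⟨q, hqp, hr⟩ =>
      hr ▸ (div_le_iff₀ (dist_pos.2 hqp.symm)).2 (hnear.self_of_nhds q)) hK0
  linarith

end LipNorm

lemma LocallyBelowLipNorm.not_locDirAttains {X : Type*} [NormedAddCommGroup X]
    [NormedSpace ℝ X] {f : X → ℝ} (hf : LocallyBelowLipNorm f) : ¬ LocDirAttains f := by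
  rintro ⟨x, u, z, -, hz, p, q, hpq, hquot, -, hp, -⟩
  obtain ⟨K, ⟨-, hK⟩, hnear⟩ := hf x
  have hbound : ∀ᶠ n in Filter.atTop, |(f (q n) - f (p n)) / ‖q n - p n‖| ≤ K := by
    filter_upwards [hp.eventually hnear] with n hn
    rw [abs_div, abs_norm, div_le_iff₀ (norm_pos_iff.2 (sub_ne_zero.2 (hpq n).symm)),
      abs_sub_comm, ← dist_eq_norm, dist_comm]
    exact hn (q n)
  linarith [le_of_tendsto hquot.abs hbound]

noncomputable def unitRamp (a x : ℝ) : ℝ := min x (a + 1) - min x a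

lemma min_sub_min_le_min_sub_min {c c' t s : ℝ} (hc : c ≤ c') (hts : t ≤ s) :
    min t c' - min t c ≤ min s c' - min s c := by
  simp only [min_def]; split_ifs <;> linarith

lemma min_sub_min_le_sub {c t s : ℝ} (hts : t ≤ s) : min s c - min t c ≤ s - t := by
  simp only [min_def]; split_ifs <;> linarith

lemma unitRamp_mono (a : ℝ) : Monotone (unitRamp a) :=
  fun _ _ h => min_sub_min_le_min_sub_min (by linarith) h

lemma unitRamp_of_le {a x : ℝ} (h : x ≤ a) : unitRamp a x = 0 := by
  rw [unitRamp, min_eq_left h, min_eq_left (by linarith), sub_self]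

lemma unitRamp_of_ge {a x : ℝ} (h : a + 1 ≤ x) : unitRamp a x = 1 := by
  rw [unitRamp, min_eq_right h, min_eq_right (by linarith)]; ring

lemma unitRamp_sub_le_one (a x y : ℝ) : unitRamp a x - unitRamp a y ≤ 1 := by
  simp only [unitRamp, min_def]; split_ifs <;> linarith

lemma sum_unitRamp_sub_le {a : ℕ → ℝ} (ha : ∀ n, a n + 1 ≤ a (n + 1)) {t s : ℝ} (hts : t ≤ s)
    (N : ℕ) : ∑ n ∈ range N, (unitRamp (a n) s - unitRamp (a n) t) ≤ s - t := by
  suffices h : ∀ N, ∑ n ∈ range N, (unitRamp (a n) s - unitRamp (a n) t)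
      ≤ min s (a N) - min t (a N) from (h N).trans (min_sub_min_le_sub hts)
  intro N
  induction N with
  | zero => simpa using min_le_min_right (a 0) hts
  | succ N ih =>
    rw [sum_range_succ]
    have := min_sub_min_le_min_sub_min (ha N) hts
    simp only [unitRamp] at *
    linarith

lemma four_pow_add_one_le_four_pow {m n : ℕ} (h : m < n) : (4 : ℝ) ^ m + 1 ≤ 4 ^ n := by
  have hm : (1 : ℝ) ≤ 4 ^ m := one_le_pow₀ (by norm_num)
  calc (4 : ℝ) ^ m + 1 ≤ 4 ^ (m + 1) := by rw [pow_succ]; linarith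
    _ ≤ 4 ^ n := pow_le_pow_right₀ (by norm_num) h

lemma natCast_lt_four_pow (n : ℕ) : (n : ℝ) < 4 ^ n := by
  exact_mod_cast Nat.lt_pow_self (by norm_num)

-- Ramps with `n ≥ ⌈t⌉₊` vanish at `t` (as `n < 4 ^ n`): this finite sum is the whole series.
noncomputable def rampSeries (c : ℕ → ℝ) (t : ℝ) : ℝ :=
  ∑ n ∈ range ⌈t⌉₊, c n * unitRamp (4 ^ n) t

lemma rampSeries_eq_sum (c : ℕ → ℝ) {t : ℝ} {B : ℕ} (hB : ⌈t⌉₊ ≤ B) :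
    rampSeries c t = ∑ n ∈ range B, c n * unitRamp (4 ^ n) t := by
  refine sum_subset (range_subset_range.2 hB) fun n _ hn => ?_
  have htn : t ≤ n := Nat.ceil_le.1 (not_lt.1 (mem_range.not.1 hn))
  rw [unitRamp_of_le (htn.trans (natCast_lt_four_pow n).le), mul_zero]

lemma rampSeries_sub_eq (c : ℕ → ℝ) {t s : ℝ} {B : ℕ} (ht : ⌈t⌉₊ ≤ B) (hs : ⌈s⌉₊ ≤ B) :
    rampSeries c s - rampSeries c t =
      ∑ n ∈ range B, c n * (unitRamp (4 ^ n) s - unitRamp (4 ^ n) t) := by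
  simp only [rampSeries_eq_sum c ht, rampSeries_eq_sum c hs, mul_sub, sum_sub_distrib]

lemma abs_rampSeries_sub_le_sum (c : ℕ → ℝ) {t s : ℝ} (hts : t ≤ s) {B : ℕ} (ht : ⌈t⌉₊ ≤ B)
    (hs : ⌈s⌉₊ ≤ B) : |rampSeries c s - rampSeries c t| ≤
      ∑ n ∈ range B, |c n| * (unitRamp (4 ^ n) s - unitRamp (4 ^ n) t) := by
  rw [rampSeries_sub_eq c ht hs]
  refine (abs_sum_le_sum_abs _ _).trans_eq (sum_congr rfl fun n _ => ?_)
  rw [abs_mul, abs_of_nonneg (sub_nonneg.2 (unitRamp_mono _ hts))]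

lemma rampSeries_zero (c : ℕ → ℝ) : rampSeries c 0 = 0 := by simp [rampSeries]

lemma rampSeries_jump (c : ℕ → ℝ) (n : ℕ) :
    rampSeries c (4 ^ n + 1) - rampSeries c (4 ^ n) = c n := by
  have hB := le_max_left (max ⌈(4 : ℝ) ^ n⌉₊ ⌈(4 : ℝ) ^ n + 1⌉₊) (n + 1)
  rw [rampSeries_sub_eq c ((le_max_left _ _).trans hB) ((le_max_right _ _).trans hB),
    sum_eq_single_of_mem n (mem_range.2 (Nat.lt_of_succ_le (le_max_right _ _))),
    unitRamp_of_ge le_rfl, unitRamp_of_le le_rfl, sub_zero, mul_one]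
  intro j _ hjn
  rcases hjn.lt_or_gt with hjn | hnj
  · have h := four_pow_add_one_le_four_pow hjn
    rw [unitRamp_of_ge (by linarith), unitRamp_of_ge h, sub_self, mul_zero]
  · have h := four_pow_add_one_le_four_pow hnj
    rw [unitRamp_of_le h, unitRamp_of_le (by linarith), sub_self, mul_zero]

lemma abs_rampSeries_sub_le {c : ℕ → ℝ} {C : ℝ} (hc : ∀ n, |c n| ≤ C) (t s : ℝ) :
    |rampSeries c s - rampSeries c t| ≤ C * |s - t| := by
  wlog hts : t ≤ s generalizing t s
  · rw [abs_sub_comm, abs_sub_comm s]; exact this s t (not_le.1 hts).le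
  have hC : 0 ≤ C := (abs_nonneg _).trans (hc 0)
  calc |rampSeries c s - rampSeries c t|
      ≤ ∑ n ∈ range (max ⌈t⌉₊ ⌈s⌉₊), |c n| * (unitRamp (4 ^ n) s - unitRamp (4 ^ n) t) :=
        abs_rampSeries_sub_le_sum c hts (le_max_left _ _) (le_max_right _ _)
    _ ≤ ∑ n ∈ range (max ⌈t⌉₊ ⌈s⌉₊), C * (unitRamp (4 ^ n) s - unitRamp (4 ^ n) t) :=
        sum_le_sum fun n _ => by gcongr; exacts [sub_nonneg.2 (unitRamp_mono _ hts), hc n]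
    _ ≤ C * |s - t| := by
        rw [← mul_sum, abs_of_nonneg (sub_nonneg.2 hts)]
        exact mul_le_mul_of_nonneg_left
          (sum_unitRamp_sub_le (fun n => four_pow_add_one_le_four_pow n.lt_succ_self) hts _) hC

lemma unitRamp_sub_le_of_lt {N n : ℕ} {t s : ℝ} (ht : t ≤ 4 ^ N) (hn : N < n) (hts : t ≤ s) :
    unitRamp (4 ^ n) s - unitRamp (4 ^ n) t ≤ 2 * (s - t) * 4⁻¹ ^ n := by
  rcases le_or_gt s (4 ^ n) with hs | hs
  · rw [unitRamp_of_le hs, unitRamp_of_le (hts.trans hs), sub_self]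
    have : 0 ≤ s - t := sub_nonneg.2 hts
    positivity
  · have hNn : 4 * (4 : ℝ) ^ N ≤ 4 ^ n := by
      rw [← pow_succ']; exact pow_le_pow_right₀ (by norm_num) hn
    have hpos : (0 : ℝ) < 4 ^ n := by positivity
    rw [inv_pow, ← div_eq_mul_inv, le_div_iff₀ hpos]
    nlinarith [unitRamp_sub_le_one (4 ^ n) s t]

lemma abs_rampSeries_sub_le_of_min_le {c : ℕ → ℝ} {C C' : ℝ} {N : ℕ} (hc : ∀ n, |c n| ≤ C)
    (hcN : ∀ n ≤ N, |c n| ≤ C') {t s : ℝ} (hN : min t s ≤ 4 ^ N) :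
    |rampSeries c s - rampSeries c t| ≤ (C' + 2 / 3 * 4⁻¹ ^ N * C) * |s - t| := by
  wlog hts : t ≤ s generalizing t s
  · rw [abs_sub_comm, abs_sub_comm s]; exact this (min_comm t s ▸ hN) (not_le.1 hts).le
  rw [min_eq_left hts] at hN
  rw [abs_of_nonneg (sub_nonneg.2 hts)]
  have hC : 0 ≤ C := (abs_nonneg _).trans (hc 0)
  have hC' : 0 ≤ C' := (abs_nonneg _).trans (hcN 0 N.zero_le)
  set B := max (max ⌈t⌉₊ ⌈s⌉₊) (N + 1)
  have hB := le_max_left (max ⌈t⌉₊ ⌈s⌉₊) (N + 1)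
  set Δ : ℕ → ℝ := fun n => unitRamp (4 ^ n) s - unitRamp (4 ^ n) t
  have hΔ : ∀ n, 0 ≤ Δ n := fun n => sub_nonneg.2 (unitRamp_mono _ hts)
  have head : ∑ n ∈ range (N + 1), |c n| * Δ n ≤ C' * (s - t) := by
    calc ∑ n ∈ range (N + 1), |c n| * Δ n ≤ ∑ n ∈ range (N + 1), C' * Δ n :=
          sum_le_sum fun n hn => by
            gcongr
            exacts [hΔ n, hcN n (Nat.lt_succ_iff.1 (mem_range.1 hn))]
      _ ≤ C' * (s - t) := by
          rw [← mul_sum]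
          exact mul_le_mul_of_nonneg_left
            (sum_unitRamp_sub_le (fun n => four_pow_add_one_le_four_pow n.lt_succ_self) hts _) hC'
  have tail : ∑ n ∈ Ico (N + 1) B, |c n| * Δ n ≤ 2 / 3 * 4⁻¹ ^ N * C * (s - t) := by
    calc ∑ n ∈ Ico (N + 1) B, |c n| * Δ n ≤ ∑ n ∈ Ico (N + 1) B, C * (2 * (s - t) * 4⁻¹ ^ n) :=
          sum_le_sum fun n hn => by
            gcongr
            exacts [hΔ n, hc n, unitRamp_sub_le_of_lt hN (mem_Ico.1 hn).1 hts]
      _ = 2 * C * (s - t) * ∑ n ∈ Ico (N + 1) B, (4⁻¹ : ℝ) ^ n := by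
          rw [mul_sum]; exact sum_congr rfl fun n _ => by ring
      _ ≤ 2 * C * (s - t) * (4⁻¹ ^ (N + 1) / (1 - 4⁻¹)) := by
          gcongr; exact geom_sum_Ico_le_of_lt_one (by norm_num) (by norm_num)
      _ = 2 / 3 * 4⁻¹ ^ N * C * (s - t) := by rw [pow_succ]; ring
  calc |rampSeries c s - rampSeries c t| ≤ ∑ n ∈ range B, |c n| * Δ n :=
        abs_rampSeries_sub_le_sum c hts ((le_max_left _ _).trans hB) ((le_max_right _ _).trans hB)
    _ = ∑ n ∈ range (N + 1), |c n| * Δ n + ∑ n ∈ Ico (N + 1) B, |c n| * Δ n :=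
        (sum_range_add_sum_Ico _ (le_max_right _ _)).symm
    _ ≤ (C' + 2 / 3 * 4⁻¹ ^ N * C) * (s - t) := by linarith

-- Coordinate `k` of `a` is spread over the ramps `n = Nat.pair k m`, `m ∈ ℕ`.
noncomputable def linftyProfile : ℓ^∞(ℕ, ℝ) →ₗ[ℝ] ℝ → ℝ where
  toFun a := rampSeries fun n => a (Nat.unpair n).1 * (n / (n + 1))
  map_add' a b := by ext t; simp [rampSeries, add_mul, sum_add_distrib]
  map_smul' r a := by ext t; simp [rampSeries, mul_sum, mul_assoc]

lemma natCast_div_add_one_le_one (n : ℕ) : (n : ℝ) / (n + 1) ≤ 1 :=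
  div_le_one_of_le₀ (by linarith) (by positivity)

lemma natCast_div_add_one_mono {m n : ℕ} (h : m ≤ n) : (m : ℝ) / (m + 1) ≤ n / (n + 1) := by
  rw [div_le_div_iff₀ (by positivity) (by positivity)]
  have : (m : ℝ) ≤ n := by exact_mod_cast h
  linarith

lemma natCast_div_add_one_add_lt_one (N : ℕ) : (N : ℝ) / (N + 1) + 2 / 3 * 4⁻¹ ^ N < 1 := by
  have hN : (N : ℝ) + 1 ≤ 4 ^ N := by exact_mod_cast Nat.lt_pow_self (by norm_num : 1 < 4)
  have hslack : 2 / 3 * 4⁻¹ ^ N < 1 / ((N : ℝ) + 1) := by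
    rw [inv_pow, ← div_eq_mul_inv, div_div, div_lt_div_iff₀ (by positivity) (by positivity)]
    linarith
  have hsplit : (N : ℝ) / (N + 1) = 1 - 1 / (N + 1) := by field_simp; ring
  linarith

lemma abs_linftyProfile_coeff_le (a : ℓ^∞(ℕ, ℝ)) (n : ℕ) :
    |a (Nat.unpair n).1 * (n / (n + 1))| ≤ ‖a‖ * (n / (n + 1)) := by
  rw [abs_mul, abs_of_nonneg (by positivity : (0 : ℝ) ≤ n / (n + 1))]
  exact mul_le_mul_of_nonneg_right (lp.norm_apply_le_norm ENNReal.top_ne_zero a _)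
    (by positivity)

lemma linftyProfile_apply_zero (a : ℓ^∞(ℕ, ℝ)) : linftyProfile a 0 = 0 :=
  rampSeries_zero _

lemma linftyProfile_jump (a : ℓ^∞(ℕ, ℝ)) (n : ℕ) :
    linftyProfile a (4 ^ n + 1) - linftyProfile a (4 ^ n) = a (Nat.unpair n).1 * (n / (n + 1)) :=
  rampSeries_jump _ n

lemma abs_linftyProfile_coeff_le_norm (a : ℓ^∞(ℕ, ℝ)) (n : ℕ) :
    |a (Nat.unpair n).1 * (n / (n + 1))| ≤ ‖a‖ :=
  (abs_linftyProfile_coeff_le a n).trans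
    (mul_le_of_le_one_right (norm_nonneg a) (natCast_div_add_one_le_one n))

lemma abs_linftyProfile_sub_le (a : ℓ^∞(ℕ, ℝ)) (t s : ℝ) :
    |linftyProfile a s - linftyProfile a t| ≤ ‖a‖ * |s - t| :=
  abs_rampSeries_sub_le (abs_linftyProfile_coeff_le_norm a) t s

lemma linftyProfile_lipschitzWith (a : ℓ^∞(ℕ, ℝ)) : LipschitzWith ‖a‖₊ (linftyProfile a) :=
  LipschitzWith.of_dist_le_mul fun s t => by
    simpa [Real.dist_eq] using abs_linftyProfile_sub_le a t s

lemma lipNorm_linftyProfile (a : ℓ^∞(ℕ, ℝ)) : lipNorm (linftyProfile a) = ‖a‖ := by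
  refine le_antisymm (lipNorm_le (norm_nonneg a) fun s t => ?_)
    (lp.norm_le_of_forall_le (lipNorm_nonneg _) fun k => ?_)
  · simpa [Real.dist_eq, abs_sub_comm] using abs_linftyProfile_sub_le a t s
  · have hslope : ∀ m, ‖a k‖ * ((Nat.pair k m : ℝ) / (Nat.pair k m + 1)) ≤
        lipNorm (linftyProfile a) := fun m => by
      have h := (linftyProfile_lipschitzWith a).div_dist_le_lipNorm
        (p := 4 ^ Nat.pair k m + 1) (q := 4 ^ Nat.pair k m) (by simp)
      rwa [Real.dist_eq, add_sub_cancel_left, abs_one, div_one, linftyProfile_jump,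
        Nat.unpair_pair, abs_mul, ← Real.norm_eq_abs,
        abs_of_nonneg (by positivity : (0 : ℝ) ≤ Nat.pair k m / (Nat.pair k m + 1))] at h
    have hlim : Filter.Tendsto (fun m => (Nat.pair k m : ℝ) / (Nat.pair k m + 1))
        Filter.atTop (𝓝 1) :=
      (tendsto_natCast_div_add_atTop 1).comp
        (Filter.tendsto_atTop_mono (Nat.right_le_pair k) Filter.tendsto_id)
    simpa using le_of_tendsto' (hlim.const_mul ‖a k‖) hslope

lemma linftyProfile_locallyBelowLipNorm {a : ℓ^∞(ℕ, ℝ)} (ha : a ≠ 0) :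
    LocallyBelowLipNorm (linftyProfile a) := by
  intro x
  set N := ⌈x⌉₊
  have hxN : x < 4 ^ N := (Nat.le_ceil x).trans_lt (natCast_lt_four_pow N)
  refine ⟨(N / (N + 1) + 2 / 3 * 4⁻¹ ^ N) * ‖a‖, ⟨by positivity, ?_⟩, ?_⟩
  · rw [lipNorm_linftyProfile]
    exact mul_lt_of_lt_one_left (norm_pos_iff.2 ha) (natCast_div_add_one_add_lt_one N)
  filter_upwards [Iio_mem_nhds hxN] with p hp q
  have hcN : ∀ n ≤ N, |a (Nat.unpair n).1 * (n / (n + 1))| ≤ ‖a‖ * (N / (N + 1)) :=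
    fun n hn => (abs_linftyProfile_coeff_le a n).trans
      (mul_le_mul_of_nonneg_left (natCast_div_add_one_mono hn) (norm_nonneg a))
  calc |linftyProfile a p - linftyProfile a q|
      ≤ (‖a‖ * (N / (N + 1)) + 2 / 3 * 4⁻¹ ^ N * ‖a‖) * |p - q| :=
        abs_rampSeries_sub_le_of_min_le (abs_linftyProfile_coeff_le_norm a) hcN
          ((min_le_right q p).trans (le_of_lt hp))
    _ = (N / (N + 1) + 2 / 3 * 4⁻¹ ^ N) * ‖a‖ * dist p q := by rw [Real.dist_eq]; ring

theorem linfty_outside_PNA_and_LDirA_general {X : Type*} [NormedAddCommGroup X] [NormedSpace ℝ X]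
    [Nontrivial X] :
    ∃ T : lp (fun _ : ℕ => ℝ) ⊤ →ₗ[ℝ] (X → ℝ),
      ∀ a : lp (fun _ : ℕ => ℝ) ⊤,
        MemLip0 (0 : X) (T a) ∧ lipNorm (T a) = ‖a‖ ∧
        (a ≠ 0 → ¬ PointwiseAttains (T a) ∧ ¬ LocDirAttains (T a)) := by
  obtain ⟨x₀, hx₀⟩ := exists_norm_eq X zero_le_one
  obtain ⟨φ, hφ, hφx₀⟩ := exists_dual_vector ℝ x₀ (hx₀ ▸ one_ne_zero)
  have hφ1 : LipschitzWith 1 φ := (NNReal.eq hφ : ‖φ‖₊ = 1) ▸ φ.lipschitz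
  have hι : Isometry fun s : ℝ => s • x₀ :=
    Isometry.of_dist_eq fun s t => by rw [dist_eq_norm, ← sub_smul, norm_smul, hx₀, mul_one,
      Real.dist_eq, Real.norm_eq_abs]
  have hφι : Function.LeftInverse φ fun s : ℝ => s • x₀ := fun s => by simp [hφx₀, hx₀]
  refine ⟨LinearMap.funLeft ℝ ℝ φ ∘ₗ linftyProfile, fun a => ?_⟩
  have hlip := linftyProfile_lipschitzWith a
  have hnorm := lipNorm_comp_eq hlip hφ1 hι hφι
  refine ⟨⟨by simp [linftyProfile_apply_zero], _, hlip.comp hφ1⟩,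
    hnorm.trans (lipNorm_linftyProfile a), fun ha => ?_⟩
  have hbelow := (linftyProfile_locallyBelowLipNorm ha).comp hφ1 hnorm
  exact ⟨hbelow.not_pointwiseAttains, hbelow.not_locDirAttains⟩

/-- For every nontrivial real Banach space `X`, the set
`[Lip₀(X) \ (PNA(X) ∪ LDirA(X))] ∪ {0}` contains an isometric copy of `ℓ∞`. -/
theorem linfty_outside_PNA_and_LDirA {X : Type*} [NormedAddCommGroup X] [NormedSpace ℝ X]
    [CompleteSpace X] [Nontrivial X] :
    ∃ T : lp (fun _ : ℕ => ℝ) ⊤ →ₗ[ℝ] (X → ℝ),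
      ∀ a : lp (fun _ : ℕ => ℝ) ⊤,
        MemLip0 (0 : X) (T a) ∧ lipNorm (T a) = ‖a‖ ∧
        (a ≠ 0 → ¬ PointwiseAttains (T a) ∧ ¬ LocDirAttains (T a)) :=
  linfty_outside_PNA_and_LDirA_general
end

section
/- For every nontrivial real Banach space X (pointed at its origin), the set [(PNA(X) ∩ LDirA(X)) \ Der(X)] ∪ {0} contains an isometric copy of ℓ∞: there exists a linear map T : ℓ∞ → Lip₀(X) such that ‖T a‖ = ‖a‖_∞ for every a ∈ ℓ∞, and for every nonzero a ∈ ℓ∞, the function T a attains both its pointwise norm and its norm locally directionally, but does not attain its norm through a derivative. -/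
open Filter Set
open scoped ZeroAtInfty ENNReal NNReal

/-! Fix a unit vector `e` and a norm-one functional `g` with `g e = 1`, and send `a ∈ ℓ∞` to
`x ↦ G_a (g x)`, where `G_a` is a series of quadratic bumps on disjoint intervals accumulating at
`0`, every bump `m` carrying the coefficient `a i` for `i = (Nat.unpair m).1`. The bumps are
`1`-Lipschitz and vanish at the ends of their intervals, so `G_a` is `‖a‖∞`-Lipschitz. The intervals
shrink superexponentially, so the secant slopes from `0` to suitable points of the bumps carrying
`a i` tend to `a i`: the norm `‖a‖∞` is attained pointwise at `0`, and locally directionally at `0`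
along `e`. But inside a bump the slope of a quadratic bump is strictly smaller than `1` in modulus,
and every other point lies in an interval on which `G_a` vanishes, so no directional derivative
reaches `‖a‖∞`. -/

open Topology

lemma Nat.tendsto_pair_atTop (i : ℕ) : Tendsto (Nat.pair i) atTop atTop :=
  tendsto_atTop_mono (Nat.right_le_pair i) tendsto_id

lemma exists_succ_le_lt {α : Type*} [LinearOrder α] {r : ℕ → α} {t : α} (h0 : t < r 0)
    (hex : ∃ n, r n ≤ t) : ∃ m, r (m + 1) ≤ t ∧ t < r m := by
  classical
  have hn : Nat.find hex ≠ 0 := fun h => (Nat.find_spec hex).not_gt (h ▸ h0)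
  refine ⟨Nat.find hex - 1, ?_, not_le.1 (Nat.find_min hex (by omega))⟩
  rw [Nat.sub_add_cancel (Nat.pos_of_ne_zero hn)]
  exact Nat.find_spec hex

lemma HasDerivAt.eq_zero_of_eqOn_Icc {f : ℝ → ℝ} {p q s c D : ℝ} (hD : HasDerivAt f D s)
    (hpq : p < q) (hs : s ∈ Icc p q) (hf : EqOn f (fun _ => c) (Icc p q)) : D = 0 :=
  (uniqueDiffOn_Icc hpq s hs).eq_deriv _ hD.hasDerivWithinAt
    ((hasDerivWithinAt_const s _ c).congr hf (hf hs))

lemma exists_seq_tendsto_zero_comp_tendsto_of_abs_le {u : ℝ → ℝ} {C : ℝ}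
    (hle : ∀ t, 0 < t → |u t| ≤ C)
    (hgt : ∀ w < C, ∀ δ > 0, ∃ t ∈ Ioo 0 δ, w < |u t|) :
    ∃ (t : ℕ → ℝ) (z : ℝ), |z| = C ∧ (∀ k, 0 < t k) ∧ Tendsto t atTop (𝓝 0) ∧
      Tendsto (u ∘ t) atTop (𝓝 z) := by
  have hinv := tendsto_one_div_add_atTop_nhds_zero_nat (𝕜 := ℝ)
  choose t ht hut using fun k : ℕ =>
    hgt (C - 1 / (k + 1)) (sub_lt_self _ (by positivity)) (1 / (k + 1)) (by positivity)
  have habs : Tendsto (fun k => |u (t k)|) atTop (𝓝 C) := by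
    refine tendsto_of_tendsto_of_tendsto_of_le_of_le ?_ tendsto_const_nhds (fun k => (hut k).le)
      fun k => hle _ (ht k).1
    simpa using tendsto_const_nhds.sub hinv
  obtain ⟨z, -, φ, hφ, hz⟩ :=
    tendsto_subseq_of_bounded (Metric.isBounded_Icc (-C) C) fun k => abs_le.1 (hle _ (ht k).1)
  refine ⟨t ∘ φ, z, tendsto_nhds_unique hz.abs (habs.comp hφ.tendsto_atTop),
    fun k => (ht _).1, ?_, hz⟩
  exact (squeeze_zero (fun k => (ht k).1.le) (fun k => (ht k).2.le) hinv).comp hφ.tendsto_atTop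

lemma csSup_eq_of_tendsto {S : Set ℝ} {C : ℝ} {u : ℕ → ℝ} (hS : ∀ x ∈ S, x ≤ C)
    (hu : ∀ k, u k ∈ S) (hlim : Tendsto u atTop (𝓝 C)) : sSup S = C :=
  (isLUB_of_mem_closure hS (mem_closure_of_tendsto hlim (Eventually.of_forall hu))).csSup_eq
    ⟨_, hu 0⟩

section Attainment

variable {M : Type*} [MetricSpace M] {f : M → ℝ} {C : ℝ} {p : M} {q : ℕ → M}

lemma lipNorm_eq_of_tendsto (hf : ∀ x y, |f x - f y| ≤ C * dist x y) (hq : ∀ k, q k ≠ p)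
    (hlim : Tendsto (fun k => |f p - f (q k)| / dist p (q k)) atTop (𝓝 C)) : lipNorm f = C := by
  refine csSup_eq_of_tendsto ?_ (fun k => ⟨p, q k, (hq k).symm, rfl⟩) hlim
  rintro _ ⟨x, y, hxy, rfl⟩
  exact (div_le_iff₀ (dist_pos.2 hxy)).2 (hf x y)

lemma pointwiseAttains_of_tendsto (hf : ∀ x y, |f x - f y| ≤ C * dist x y) (hq : ∀ k, q k ≠ p)
    (hlim : Tendsto (fun k => |f p - f (q k)| / dist p (q k)) atTop (𝓝 C)) :
    PointwiseAttains f := by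
  refine ⟨p, (lipNorm_eq_of_tendsto hf hq hlim).symm ▸ csSup_eq_of_tendsto ?_
    (fun k => ⟨q k, hq k, rfl⟩) hlim⟩
  rintro _ ⟨y, hy, rfl⟩
  exact (div_le_iff₀ (dist_pos.2 hy.symm)).2 (hf p y)

end Attainment

section NormedSpace

variable {X : Type*} [NormedAddCommGroup X] [NormedSpace ℝ X]

lemma locDirAttains_of_tendsto {f : X → ℝ} {e : X} (he : ‖e‖ = 1) {t : ℕ → ℝ} (ht : ∀ k, 0 < t k)
    (ht0 : Tendsto t atTop (𝓝 0)) {z : ℝ}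
    (hz : Tendsto (fun k => (f (t k • e) - f 0) / t k) atTop (𝓝 z)) (hzf : |z| = lipNorm f) :
    LocDirAttains f := by
  have hnorm : ∀ k, ‖t k • e‖ = t k := fun k => by
    rw [norm_smul, he, mul_one, Real.norm_of_nonneg (ht k).le]
  have he0 : e ≠ 0 := norm_ne_zero_iff.1 (he ▸ one_ne_zero)
  refine ⟨0, -e, z, by rw [norm_neg, he], hzf, fun _ => 0, fun k => t k • e,
    fun k => (smul_ne_zero (ht k).ne' he0).symm, ?_, ?_, tendsto_const_nhds, ?_⟩
  · simpa only [sub_zero, hnorm] using hz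
  · refine tendsto_const_nhds.congr fun k => ?_
    rw [zero_sub, norm_neg, hnorm, smul_neg, smul_smul, inv_mul_cancel₀ (ht k).ne', one_smul]
  · simpa using ht0.smul_const e

/-- A directional derivative of `h ∘ g` is a derivative of `h` scaled by `g e`, and `|g e| ≤ 1`. -/
lemma not_derAttains_comp {h : ℝ → ℝ} {C : ℝ} (hC : 0 < C)
    (hh : ∀ s D, HasDerivAt h D s → |D| < C) {g : X →L[ℝ] ℝ} (hg : ‖g‖ ≤ 1)
    (hf : lipNorm (fun x => h (g x)) = C) : ¬ DerAttains (fun x => h (g x)) := by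
  rintro ⟨x, e, he, L, hL, hLC⟩
  rw [hf] at hLC
  set c := g e
  have hc : |c| ≤ 1 := by
    simpa [he] using (g.le_opNorm e).trans (mul_le_of_le_one_left (norm_nonneg e) hg)
  have hline : HasDerivAt (fun t => h (g x + t * c)) L 0 := by
    rw [hasDerivAt_iff_tendsto_slope_zero]
    refine hL.congr fun t => ?_
    simp [c, div_eq_inv_mul]
  by_cases hc0 : c = 0
  · have hL0 : L = 0 := hline.unique (by simpa [hc0] using hasDerivAt_const (0 : ℝ) (h (g x)))
    rw [hL0, abs_zero] at hLC
    exact hC.ne hLC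
  have hk : HasDerivAt (fun u => (u - g x) * c⁻¹) (1 * c⁻¹) (g x) :=
    ((hasDerivAt_id' _).sub_const _).mul_const _
  have hline' : HasDerivAt (fun t => h (g x + t * c)) L ((g x - g x) * c⁻¹) := by
    rwa [sub_self, zero_mul]
  have hcomp : (fun t => h (g x + t * c)) ∘ (fun u => (u - g x) * c⁻¹) = h := by
    funext u
    simp [Function.comp, hc0]
  have hder := hh _ _ (hcomp ▸ hline'.comp (g x) hk)
  rw [one_mul, abs_mul, abs_inv] at hder
  have hLc : |L| ≤ |L| * |c|⁻¹ :=
    le_mul_of_one_le_right (abs_nonneg L) ((one_le_inv₀ (abs_pos.2 hc0)).2 hc)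
  linarith

lemma abs_comp_sub_le {h : ℝ → ℝ} {C : ℝ} (hC : 0 ≤ C) (hh : ∀ x y, |h x - h y| ≤ C * |x - y|)
    {g : X →L[ℝ] ℝ} (hg : ‖g‖ ≤ 1) (x y : X) : |h (g x) - h (g y)| ≤ C * dist x y := by
  have hgxy : |g x - g y| ≤ dist x y := by
    rw [← map_sub, dist_eq_norm, ← Real.norm_eq_abs]
    exact (g.le_opNorm _).trans (mul_le_of_le_one_left (norm_nonneg _) hg)
  exact (hh _ _).trans (mul_le_mul_of_nonneg_left hgxy hC)

/-- On the line `ℝ e` the function `h ∘ g` is `h`, so secant slopes of `h` from `0` are secant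
slopes of `h ∘ g` from `0`. -/
lemma lipNorm_comp_eq_and_attains {h : ℝ → ℝ} {C : ℝ} (hh : ∀ x y, |h x - h y| ≤ C * |x - y|)
    (h0 : h 0 = 0) {g : X →L[ℝ] ℝ} (hg : ‖g‖ ≤ 1) {e : X} (he : ‖e‖ = 1) (hge : g e = 1)
    {t : ℕ → ℝ} {z : ℝ} (hz : |z| = C) (ht : ∀ k, 0 < t k) (ht0 : Tendsto t atTop (𝓝 0))
    (hlim : Tendsto (fun k => h (t k) / t k) atTop (𝓝 z)) :
    lipNorm (fun x => h (g x)) = C ∧ PointwiseAttains (fun x => h (g x)) ∧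
      LocDirAttains (fun x => h (g x)) := by
  have hf := abs_comp_sub_le (hz ▸ abs_nonneg z) hh hg
  have hline : ∀ k, h (g (t k • e)) = h (t k) := fun k => by
    rw [map_smul, hge, smul_eq_mul, mul_one]
  have hdist : ∀ k, dist 0 (t k • e) = t k := fun k => by
    rw [dist_zero_left, norm_smul, he, mul_one, Real.norm_of_nonneg (ht k).le]
  have hq : ∀ k, t k • e ≠ 0 := fun k => by
    rw [← norm_pos_iff, ← dist_zero_left, hdist]; exact ht k
  have hratio :
      Tendsto (fun k => |h (g 0) - h (g (t k • e))| / dist 0 (t k • e)) atTop (𝓝 C) := by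
    refine hz ▸ hlim.abs.congr fun k => ?_
    rw [map_zero, h0, hline, hdist, zero_sub, abs_neg, abs_div, abs_of_pos (ht k)]
  have hnorm := lipNorm_eq_of_tendsto hf hq hratio
  refine ⟨hnorm, pointwiseAttains_of_tendsto hf hq hratio,
    locDirAttains_of_tendsto he ht ht0 (hlim.congr fun k => ?_) (hnorm ▸ hz)⟩
  rw [hline, map_zero, h0, sub_zero]

end NormedSpace

noncomputable section

namespace LinftyBumps

/-- `τ (1 - τ)` on `[0, 1]` and `0` elsewhere, written so that it is visibly `1`-Lipschitz. -/
def bumpProfile (τ : ℝ) : ℝ := 1 / 4 - min |τ - 1 / 2| (1 / 2) ^ 2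

lemma bumpProfile_eq_of_mem_Icc {τ : ℝ} (hτ : τ ∈ Icc 0 1) : bumpProfile τ = τ * (1 - τ) := by
  have h : |τ - 1 / 2| ≤ 1 / 2 := abs_le.2 ⟨by linarith [hτ.1], by linarith [hτ.2]⟩
  rw [bumpProfile, min_eq_left h, sq_abs]
  ring

lemma bumpProfile_eq_zero_of_notMem_Ioo {τ : ℝ} (hτ : τ ∉ Ioo 0 1) : bumpProfile τ = 0 := by
  have h : 1 / 2 ≤ |τ - 1 / 2| := by
    rw [mem_Ioo, not_and_or, not_lt, not_lt] at hτ
    rcases hτ with hτ | hτ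
    · rw [abs_of_nonpos (by linarith)]; linarith
    · rw [abs_of_nonneg (by linarith)]; linarith
  rw [bumpProfile, min_eq_right h]
  norm_num

lemma abs_bumpProfile_sub_le (x y : ℝ) : |bumpProfile x - bumpProfile y| ≤ |x - y| := by
  set u := min |x - 1 / 2| (1 / 2)
  set v := min |y - 1 / 2| (1 / 2)
  have hu : u ∈ Icc 0 (1 / 2) := ⟨le_min (abs_nonneg _) (by norm_num), min_le_right _ _⟩
  have hv : v ∈ Icc 0 (1 / 2) := ⟨le_min (abs_nonneg _) (by norm_num), min_le_right _ _⟩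
  have huv : |u - v| ≤ |x - y| := by
    calc |u - v| ≤ max |(|x - 1 / 2|) - (|y - 1 / 2|)| |(1 / 2 : ℝ) - 1 / 2| :=
          abs_min_sub_min_le_max _ _ _ _
      _ ≤ |x - y| := by
          rw [sub_self, abs_zero, max_le_iff]
          refine ⟨?_, abs_nonneg _⟩
          simpa using abs_abs_sub_abs_le_abs_sub (x - 1 / 2) (y - 1 / 2)
  have hsum : |v + u| ≤ 1 := abs_le.2 ⟨by linarith [hu.1, hv.1], by linarith [hu.2, hv.2]⟩
  calc |bumpProfile x - bumpProfile y| = |v - u| * |v + u| := by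
        rw [← abs_mul, bumpProfile, bumpProfile]; congr 1; ring
    _ ≤ |x - y| * 1 := by
        rw [abs_sub_comm]; exact mul_le_mul huv hsum (abs_nonneg _) (abs_nonneg _)
    _ = |x - y| := mul_one _

/-- Bump `m` lives on `(leftEnd m, rightEnd m)`. The exponent `(m + 1) ^ 2` leaves the gaps
`rightEnd (m + 1) < leftEnd m`, and `leftEnd m = rightEnd m * ratio m ^ 2` makes the secant slope
from `0` to `samplePoint m = rightEnd m * ratio m` equal to `(1 - ratio m) / (1 + ratio m) → 1`. -/
def ratio (m : ℕ) : ℝ := 2⁻¹ ^ (m + 1)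

def rightEnd (m : ℕ) : ℝ := 2⁻¹ ^ ((m + 1) ^ 2)

def leftEnd (m : ℕ) : ℝ := rightEnd m * ratio m ^ 2

def width (m : ℕ) : ℝ := rightEnd m - leftEnd m

lemma ratio_pos (m : ℕ) : 0 < ratio m := by unfold ratio; positivity

lemma ratio_lt_one (m : ℕ) : ratio m < 1 := pow_lt_one₀ (by norm_num) (by norm_num) (by omega)

lemma rightEnd_pos (m : ℕ) : 0 < rightEnd m := by unfold rightEnd; positivity

lemma leftEnd_pos (m : ℕ) : 0 < leftEnd m := mul_pos (rightEnd_pos m) (pow_pos (ratio_pos m) 2)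

lemma leftEnd_lt_rightEnd (m : ℕ) : leftEnd m < rightEnd m := by
  have := pow_lt_one₀ (ratio_pos m).le (ratio_lt_one m) two_ne_zero
  unfold leftEnd; nlinarith [rightEnd_pos m]

lemma width_pos (m : ℕ) : 0 < width m := sub_pos.2 (leftEnd_lt_rightEnd m)

lemma rightEnd_succ_lt_leftEnd (m : ℕ) : rightEnd (m + 1) < leftEnd m := by
  have h : leftEnd m = 2⁻¹ ^ ((m + 1) ^ 2 + 2 * (m + 1)) := by
    rw [leftEnd, rightEnd, ratio, ← pow_mul, ← pow_add]; ring_nf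
  rw [h, rightEnd]
  exact pow_lt_pow_right_of_lt_one₀ (by norm_num) (by norm_num) (by ring_nf; omega)

lemma rightEnd_strictAnti : StrictAnti rightEnd :=
  strictAnti_nat_of_succ_lt fun m => (rightEnd_succ_lt_leftEnd m).trans (leftEnd_lt_rightEnd m)

lemma leftEnd_strictAnti : StrictAnti leftEnd :=
  strictAnti_nat_of_succ_lt fun m => (leftEnd_lt_rightEnd _).trans (rightEnd_succ_lt_leftEnd m)

lemma rightEnd_le_leftEnd_of_lt {m m' : ℕ} (h : m < m') : rightEnd m' ≤ leftEnd m :=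
  (rightEnd_strictAnti.antitone h).trans (rightEnd_succ_lt_leftEnd m).le

lemma rightEnd_le_ratio (m : ℕ) : rightEnd m ≤ ratio m :=
  pow_le_pow_of_le_one (by norm_num) (by norm_num) (by nlinarith)

lemma eq_of_mem_Icc_of_mem_Ioo {m m' : ℕ} {t : ℝ} (h : t ∈ Icc (leftEnd m) (rightEnd m))
    (h' : t ∈ Ioo (leftEnd m') (rightEnd m')) : m = m' := by
  rcases lt_trichotomy m m' with hlt | heq | hgt
  · linarith [rightEnd_le_leftEnd_of_lt hlt, h.1, h'.2]
  · exact heq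
  · linarith [rightEnd_le_leftEnd_of_lt hgt, h.2, h'.1]

def bump (m : ℕ) (t : ℝ) : ℝ := width m * bumpProfile ((t - leftEnd m) / width m)

lemma bump_eq_of_mem_Icc {m : ℕ} {t : ℝ} (ht : t ∈ Icc (leftEnd m) (rightEnd m)) :
    bump m t = (t - leftEnd m) * (1 - (t - leftEnd m) / width m) := by
  have hw := width_pos m
  have hτ : (t - leftEnd m) / width m ∈ Icc 0 1 := by
    rw [mem_Icc, div_le_one hw, width]
    exact ⟨div_nonneg (by linarith [ht.1]) hw.le, by linarith [ht.2]⟩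
  rw [bump, bumpProfile_eq_of_mem_Icc hτ]
  field_simp

lemma bump_eq_zero_of_notMem_Ioo {m : ℕ} {t : ℝ} (ht : t ∉ Ioo (leftEnd m) (rightEnd m)) :
    bump m t = 0 := by
  have hw := width_pos m
  refine mul_eq_zero_of_right _ (bumpProfile_eq_zero_of_notMem_Ioo fun hτ => ht ?_)
  rw [mem_Ioo, div_pos_iff_of_pos_right hw, div_lt_one hw, width] at hτ
  exact ⟨by linarith [hτ.1], by linarith [hτ.2]⟩

lemma abs_bump_sub_le (m : ℕ) (x y : ℝ) : |bump m x - bump m y| ≤ |x - y| := by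
  have hw := width_pos m
  calc |bump m x - bump m y|
        = width m * |bumpProfile ((x - leftEnd m) / width m) -
            bumpProfile ((y - leftEnd m) / width m)| := by
          rw [bump, bump, ← mul_sub, abs_mul, abs_of_pos hw]
    _ ≤ width m * |(x - leftEnd m) / width m - (y - leftEnd m) / width m| :=
          mul_le_mul_of_nonneg_left (abs_bumpProfile_sub_le _ _) hw.le
    _ = |x - y| := by
          rw [← sub_div, abs_div, abs_of_pos hw, mul_div_cancel₀ _ hw.ne',
            sub_sub_sub_cancel_right]

lemma hasDerivAt_bump {m : ℕ} {t : ℝ} (ht : t ∈ Ioo (leftEnd m) (rightEnd m)) :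
    HasDerivAt (bump m) (1 - 2 * ((t - leftEnd m) / width m)) t := by
  have hpoly : HasDerivAt (fun s => (s - leftEnd m) * (1 - (s - leftEnd m) / width m))
      (1 - 2 * ((t - leftEnd m) / width m)) t := by
    have h : HasDerivAt (fun s : ℝ => s - leftEnd m) 1 t := (hasDerivAt_id' t).sub_const _
    exact (h.mul ((h.div_const (width m)).const_sub 1)).congr_deriv (by ring)
  refine hpoly.congr_of_eventuallyEq ?_
  filter_upwards [Ioo_mem_nhds ht.1 ht.2] with s hs
  exact bump_eq_of_mem_Icc (Ioo_subset_Icc_self hs)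

lemma tendsto_ratio_atTop : Tendsto ratio atTop (𝓝 0) :=
  (tendsto_pow_atTop_nhds_zero_of_lt_one (by norm_num) (by norm_num)).comp
    (tendsto_add_atTop_nat 1)

/-- Coordinate `i` of `a` is carried by every bump `m` with `(Nat.unpair m).1 = i`, hence at
arbitrarily small scales. -/
def bumpSeries (a : ℕ → ℝ) (t : ℝ) : ℝ := ∑' m, a (Nat.unpair m).1 * bump m t

lemma bumpSeries_eq_of_mem_Icc (a : ℕ → ℝ) {m : ℕ} {t : ℝ}
    (ht : t ∈ Icc (leftEnd m) (rightEnd m)) : bumpSeries a t = a (Nat.unpair m).1 * bump m t :=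
  tsum_eq_single m fun _ hm' => by
    rw [bump_eq_zero_of_notMem_Ioo fun h => hm' (eq_of_mem_Icc_of_mem_Ioo ht h).symm, mul_zero]

lemma bumpSeries_eq_zero (a : ℕ → ℝ) {t : ℝ} (ht : ∀ m, t ∉ Ioo (leftEnd m) (rightEnd m)) :
    bumpSeries a t = 0 := by
  simp [bumpSeries, bump_eq_zero_of_notMem_Ioo (ht _)]

lemma bumpSeries_zero (a : ℕ → ℝ) : bumpSeries a 0 = 0 :=
  bumpSeries_eq_zero a fun m h => (leftEnd_pos m).not_gt h.1

lemma bumpSeries_leftEnd (a : ℕ → ℝ) (m : ℕ) : bumpSeries a (leftEnd m) = 0 := by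
  rw [bumpSeries_eq_of_mem_Icc a ⟨le_rfl, (leftEnd_lt_rightEnd m).le⟩,
    bump_eq_zero_of_notMem_Ioo fun h => lt_irrefl _ h.1, mul_zero]

lemma bumpSeries_rightEnd (a : ℕ → ℝ) (m : ℕ) : bumpSeries a (rightEnd m) = 0 := by
  rw [bumpSeries_eq_of_mem_Icc a ⟨(leftEnd_lt_rightEnd m).le, le_rfl⟩,
    bump_eq_zero_of_notMem_Ioo fun h => lt_irrefl _ h.2, mul_zero]

lemma exists_bumpSeries_eq (t : ℝ) :
    ∃ m, ∀ a, bumpSeries a t = a (Nat.unpair m).1 * bump m t := by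
  by_cases h : ∃ m, t ∈ Ioo (leftEnd m) (rightEnd m)
  · obtain ⟨m, hm⟩ := h
    exact ⟨m, fun a => bumpSeries_eq_of_mem_Icc a (Ioo_subset_Icc_self hm)⟩
  · push Not at h
    exact ⟨0, fun a => by rw [bumpSeries_eq_zero a h, bump_eq_zero_of_notMem_Ioo (h 0), mul_zero]⟩

lemma bumpSeries_add (a b : ℕ → ℝ) (t : ℝ) :
    bumpSeries (a + b) t = bumpSeries a t + bumpSeries b t := by
  obtain ⟨m, hm⟩ := exists_bumpSeries_eq t
  rw [hm, hm, hm, Pi.add_apply, add_mul]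

lemma bumpSeries_smul (c : ℝ) (a : ℕ → ℝ) (t : ℝ) :
    bumpSeries (c • a) t = c * bumpSeries a t := by
  obtain ⟨m, hm⟩ := exists_bumpSeries_eq t
  rw [hm, hm, Pi.smul_apply, smul_eq_mul, mul_assoc]

section Lipschitz

variable {a : ℕ → ℝ} {C : ℝ}

lemma abs_bumpSeries_sub_le_of_mem_Icc (ha : ∀ i, |a i| ≤ C) {m : ℕ} {x y : ℝ}
    (hx : x ∈ Icc (leftEnd m) (rightEnd m)) (hy : y ∈ Icc (leftEnd m) (rightEnd m)) :
    |bumpSeries a x - bumpSeries a y| ≤ C * |x - y| := by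
  rw [bumpSeries_eq_of_mem_Icc a hx, bumpSeries_eq_of_mem_Icc a hy, ← mul_sub, abs_mul]
  exact mul_le_mul (ha _) (abs_bump_sub_le m x y) (abs_nonneg _) ((abs_nonneg _).trans (ha 0))

lemma abs_bumpSeries_le_sub_leftEnd (ha : ∀ i, |a i| ≤ C) {m : ℕ} {x : ℝ}
    (hx : x ∈ Icc (leftEnd m) (rightEnd m)) : |bumpSeries a x| ≤ C * (x - leftEnd m) := by
  simpa [bumpSeries_leftEnd, abs_of_nonneg (sub_nonneg.2 hx.1)] using
    abs_bumpSeries_sub_le_of_mem_Icc ha hx ⟨le_rfl, (leftEnd_lt_rightEnd m).le⟩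

lemma abs_bumpSeries_le_rightEnd_sub (ha : ∀ i, |a i| ≤ C) {m : ℕ} {x : ℝ}
    (hx : x ∈ Icc (leftEnd m) (rightEnd m)) : |bumpSeries a x| ≤ C * (rightEnd m - x) := by
  simpa [bumpSeries_rightEnd, abs_sub_comm x, abs_of_nonneg (sub_nonneg.2 hx.2)] using
    abs_bumpSeries_sub_le_of_mem_Icc ha hx ⟨(leftEnd_lt_rightEnd m).le, le_rfl⟩

lemma abs_bumpSeries_sub_le (ha : ∀ i, |a i| ≤ C) (x y : ℝ) :
    |bumpSeries a x - bumpSeries a y| ≤ C * |x - y| := by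
  wlog hxy : x ≤ y generalizing x y
  · rw [abs_sub_comm, abs_sub_comm x]; exact this y x (le_of_not_ge hxy)
  have hC : 0 ≤ C := (abs_nonneg _).trans (ha 0)
  rw [abs_sub_comm x, abs_of_nonneg (sub_nonneg.2 hxy)]
  by_cases hx : ∃ m, x ∈ Ioo (leftEnd m) (rightEnd m) <;>
    by_cases hy : ∃ m, y ∈ Ioo (leftEnd m) (rightEnd m)
  · obtain ⟨m, hxm⟩ := hx
    obtain ⟨m', hym⟩ := hy
    rcases lt_trichotomy m m' with hlt | rfl | hgt
    · linarith [rightEnd_le_leftEnd_of_lt hlt, hxm.1, hym.2]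
    · refine (abs_bumpSeries_sub_le_of_mem_Icc ha (Ioo_subset_Icc_self hxm)
        (Ioo_subset_Icc_self hym)).trans_eq ?_
      rw [abs_sub_comm, abs_of_nonneg (sub_nonneg.2 hxy)]
    · calc |bumpSeries a x - bumpSeries a y| ≤ |bumpSeries a x| + |bumpSeries a y| := abs_sub _ _
        _ ≤ C * (rightEnd m - x) + C * (y - leftEnd m') :=
          add_le_add (abs_bumpSeries_le_rightEnd_sub ha (Ioo_subset_Icc_self hxm))
            (abs_bumpSeries_le_sub_leftEnd ha (Ioo_subset_Icc_self hym))
        _ ≤ C * (y - x) := by nlinarith [rightEnd_le_leftEnd_of_lt hgt]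
  · obtain ⟨m, hxm⟩ := hx
    push Not at hy
    have hym : rightEnd m ≤ y := not_lt.1 fun h => hy m ⟨hxm.1.trans_le hxy, h⟩
    rw [bumpSeries_eq_zero a hy, sub_zero]
    nlinarith [abs_bumpSeries_le_rightEnd_sub ha (Ioo_subset_Icc_self hxm)]
  · obtain ⟨m, hym⟩ := hy
    push Not at hx
    have hxm : x ≤ leftEnd m := not_lt.1 fun h => hx m ⟨h, hxy.trans_lt hym.2⟩
    rw [bumpSeries_eq_zero a hx, zero_sub, abs_neg]
    nlinarith [abs_bumpSeries_le_sub_leftEnd ha (Ioo_subset_Icc_self hym)]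
  · push Not at hx hy
    rw [bumpSeries_eq_zero a hx, bumpSeries_eq_zero a hy, sub_self, abs_zero]
    exact mul_nonneg hC (sub_nonneg.2 hxy)

end Lipschitz

lemma exists_Icc_gap_or_mem_Ioo (s : ℝ) :
    (∃ p q, p < q ∧ s ∈ Icc p q ∧ ∀ t ∈ Icc p q, ∀ m, t ∉ Ioo (leftEnd m) (rightEnd m)) ∨
      ∃ m, s ∈ Ioo (leftEnd m) (rightEnd m) := by
  by_cases hs : ∃ m, s ∈ Ioo (leftEnd m) (rightEnd m)
  · exact Or.inr hs
  push Not at hs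
  left
  rcases le_or_gt s 0 with h0 | h0
  · exact ⟨s - 1, s, by linarith, ⟨by linarith, le_rfl⟩,
      fun t ht m hm => by linarith [ht.2, hm.1, leftEnd_pos m]⟩
  rcases le_or_gt (rightEnd 0) s with hr | hr
  · exact ⟨s, s + 1, by linarith, ⟨le_rfl, by linarith⟩,
      fun t ht m hm => by linarith [ht.1, hm.2, rightEnd_strictAnti.antitone (Nat.zero_le m)]⟩
  have hex : ∃ n, rightEnd n ≤ s := by
    obtain ⟨n, hn⟩ := (tendsto_ratio_atTop.eventually (gt_mem_nhds h0)).exists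
    exact ⟨n, (rightEnd_le_ratio n).trans hn.le⟩
  obtain ⟨m, hm₁, hm₂⟩ := exists_succ_le_lt hr hex
  have hsl : s ≤ leftEnd m := not_lt.1 fun h => hs m ⟨h, hm₂⟩
  refine ⟨rightEnd (m + 1), leftEnd m, rightEnd_succ_lt_leftEnd m, ⟨hm₁, hsl⟩,
    fun t ht m' hm' => ?_⟩
  rcases le_or_gt m' m with h | h
  · linarith [ht.2, hm'.1, leftEnd_strictAnti.antitone h]
  · linarith [ht.1, hm'.2, rightEnd_strictAnti.antitone (Nat.succ_le_of_lt h)]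

/-- Inside bump `m` the slope is `a i * (1 - 2 τ)` with `τ ∈ (0, 1)`; every other point lies in a
nondegenerate interval on which the series vanishes. -/
lemma abs_lt_of_hasDerivAt_bumpSeries {a : ℕ → ℝ} {C : ℝ} (ha : ∀ i, |a i| ≤ C) (hC : 0 < C)
    {s D : ℝ} (hD : HasDerivAt (bumpSeries a) D s) : |D| < C := by
  rcases exists_Icc_gap_or_mem_Ioo s with ⟨p, q, hpq, hs, hgap⟩ | ⟨m, hm⟩
  · rw [HasDerivAt.eq_zero_of_eqOn_Icc hD hpq hs fun t ht => bumpSeries_eq_zero a (hgap t ht),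
      abs_zero]
    exact hC
  set τ := (s - leftEnd m) / width m
  have hloc : bumpSeries a =ᶠ[𝓝 s] fun t => a (Nat.unpair m).1 * bump m t := by
    filter_upwards [Ioo_mem_nhds hm.1 hm.2] with t ht
    exact bumpSeries_eq_of_mem_Icc a (Ioo_subset_Icc_self ht)
  have hDeq : D = a (Nat.unpair m).1 * (1 - 2 * τ) :=
    hD.unique (((hasDerivAt_bump hm).const_mul _).congr_of_eventuallyEq hloc)
  have hτ : |1 - 2 * τ| < 1 := by
    have hw := width_pos m
    have h0 : 0 < τ := div_pos (by linarith [hm.1]) hw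
    have h1 : τ < 1 := by rw [div_lt_one hw, width]; linarith [hm.2]
    exact abs_lt.2 ⟨by linarith, by linarith⟩
  rw [hDeq, abs_mul]
  nlinarith [mul_le_mul_of_nonneg_right (ha (Nat.unpair m).1) (abs_nonneg (1 - 2 * τ))]

def samplePoint (m : ℕ) : ℝ := rightEnd m * ratio m

lemma samplePoint_pos (m : ℕ) : 0 < samplePoint m := mul_pos (rightEnd_pos m) (ratio_pos m)

lemma samplePoint_mem_Ioo (m : ℕ) : samplePoint m ∈ Ioo (leftEnd m) (rightEnd m) := by
  have hr := rightEnd_pos m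
  have hq := ratio_pos m
  have hq1 := ratio_lt_one m
  constructor
  · rw [leftEnd, samplePoint, sq, ← mul_assoc]
    exact mul_lt_mul_of_pos_left hq1 (mul_pos hr hq) |>.trans_eq (mul_one _)
  · exact (mul_lt_mul_of_pos_left hq1 hr).trans_eq (mul_one _)

lemma bump_samplePoint_div (m : ℕ) :
    bump m (samplePoint m) / samplePoint m = (1 - ratio m) / (1 + ratio m) := by
  have hr := (rightEnd_pos m).ne'
  have hq := (ratio_pos m).ne'
  have hq1 : 1 - ratio m ≠ 0 := (sub_pos.2 (ratio_lt_one m)).ne'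
  have hq2 : 1 + ratio m ≠ 0 := (add_pos one_pos (ratio_pos m)).ne'
  have hw : width m = rightEnd m * (1 - ratio m) * (1 + ratio m) := by
    rw [width, leftEnd]; ring
  rw [bump_eq_of_mem_Icc (Ioo_subset_Icc_self (samplePoint_mem_Ioo m)), hw, leftEnd, samplePoint]
  field_simp
  ring

lemma tendsto_samplePoint_atTop : Tendsto samplePoint atTop (𝓝 0) :=
  squeeze_zero (fun m => (samplePoint_pos m).le)
    (fun m => mul_le_of_le_one_left (ratio_pos m).le
      ((rightEnd_le_ratio m).trans (ratio_lt_one m).le))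
    tendsto_ratio_atTop

lemma tendsto_bumpSeries_samplePoint_div (a : ℕ → ℝ) (i : ℕ) :
    Tendsto (fun k => bumpSeries a (samplePoint (Nat.pair i k)) / samplePoint (Nat.pair i k))
      atTop (𝓝 (a i)) := by
  have hq := tendsto_ratio_atTop.comp (Nat.tendsto_pair_atTop i)
  have hlim := ((tendsto_const_nhds (x := (1 : ℝ)).sub hq).div
    (tendsto_const_nhds (x := (1 : ℝ)).add hq) (by norm_num)).const_mul (a i)
  rw [sub_zero, add_zero, div_one, mul_one] at hlim
  refine hlim.congr fun k => ?_
  rw [bumpSeries_eq_of_mem_Icc a (Ioo_subset_Icc_self (samplePoint_mem_Ioo _)), Nat.unpair_pair,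
    mul_div_assoc, bump_samplePoint_div]
  rfl

lemma exists_lt_abs_bumpSeries_div (a : ℕ → ℝ) {w : ℝ} (hw : ∃ i, w < |a i|) {δ : ℝ}
    (hδ : 0 < δ) :
    ∃ t ∈ Ioo 0 δ, w < |bumpSeries a t / t| := by
  obtain ⟨i, hi⟩ := hw
  obtain ⟨k, hk₁, hk₂⟩ := (((tendsto_bumpSeries_samplePoint_div a i).abs.eventually
    (lt_mem_nhds hi)).and ((tendsto_samplePoint_atTop.comp (Nat.tendsto_pair_atTop i)).eventually
      (gt_mem_nhds hδ))).exists
  exact ⟨_, ⟨samplePoint_pos _, hk₂⟩, hk₁⟩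

lemma exists_seq_tendsto_bumpSeries_div (a : lp (fun _ : ℕ => ℝ) ⊤) :
    ∃ (t : ℕ → ℝ) (z : ℝ), |z| = ‖a‖ ∧ (∀ k, 0 < t k) ∧ Tendsto t atTop (𝓝 0) ∧
      Tendsto (fun k => bumpSeries a (t k) / t k) atTop (𝓝 z) := by
  have ha : ∀ i, |a i| ≤ ‖a‖ := lp.norm_apply_le_norm ENNReal.top_ne_zero a
  refine exists_seq_tendsto_zero_comp_tendsto_of_abs_le (fun t ht => ?_) fun w hw δ hδ =>
    exists_lt_abs_bumpSeries_div a (exists_lt_of_lt_ciSup (lp.norm_eq_ciSup a ▸ hw)) hδ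
  simpa [abs_div, abs_of_pos ht, bumpSeries_zero, div_le_iff₀ ht] using
    abs_bumpSeries_sub_le ha t 0

def bumpSeriesMap {X : Type*} (g : X → ℝ) : lp (fun _ : ℕ => ℝ) ⊤ →ₗ[ℝ] (X → ℝ) where
  toFun a x := bumpSeries a (g x)
  map_add' a b := funext fun x => bumpSeries_add a b (g x)
  map_smul' c a := funext fun x => bumpSeries_smul c a (g x)

end LinftyBumps

end

open LinftyBumps

theorem linfty_in_PNA_inter_LDirA_not_Der_general {X : Type*} [NormedAddCommGroup X]
    [NormedSpace ℝ X] [Nontrivial X] :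
    ∃ T : lp (fun _ : ℕ => ℝ) ⊤ →ₗ[ℝ] (X → ℝ),
      ∀ a : lp (fun _ : ℕ => ℝ) ⊤,
        MemLip0 (0 : X) (T a) ∧ lipNorm (T a) = ‖a‖ ∧
        (a ≠ 0 → PointwiseAttains (T a) ∧ LocDirAttains (T a) ∧ ¬ DerAttains (T a)) := by
  obtain ⟨e, he⟩ := exists_norm_eq X zero_le_one
  obtain ⟨g, hg, hge⟩ := exists_dual_vector ℝ e (by rw [he]; exact one_ne_zero)
  rw [he, RCLike.ofReal_one] at hge
  refine ⟨bumpSeriesMap g, fun a => ?_⟩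
  have ha : ∀ i, |a i| ≤ ‖a‖ := lp.norm_apply_le_norm ENNReal.top_ne_zero a
  have hG := abs_bumpSeries_sub_le ha
  obtain ⟨t, z, hz, ht, ht0, hlim⟩ := exists_seq_tendsto_bumpSeries_div a
  obtain ⟨hnorm, hpna, hldir⟩ :=
    lipNorm_comp_eq_and_attains hG (bumpSeries_zero a) hg.le he hge hz ht ht0 hlim
  have hpos : a ≠ 0 → 0 < ‖a‖ := norm_pos_iff.2
  refine ⟨⟨by simp [bumpSeriesMap, bumpSeries_zero], ‖a‖₊,
    LipschitzWith.of_dist_le_mul (abs_comp_sub_le (norm_nonneg a) hG hg.le)⟩, hnorm,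
    fun ha0 => ⟨hpna, hldir, not_derAttains_comp (hpos ha0)
      (fun _ _ => abs_lt_of_hasDerivAt_bumpSeries ha (hpos ha0)) hg.le hnorm⟩⟩

/-- For every nontrivial real Banach space `X`, the set
`[(PNA(X) ∩ LDirA(X)) \ Der(X)] ∪ {0}` contains an isometric copy of `ℓ∞`. -/
theorem linfty_in_PNA_inter_LDirA_not_Der {X : Type*} [NormedAddCommGroup X]
    [NormedSpace ℝ X] [CompleteSpace X] [Nontrivial X] :
    ∃ T : lp (fun _ : ℕ => ℝ) ⊤ →ₗ[ℝ] (X → ℝ),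
      ∀ a : lp (fun _ : ℕ => ℝ) ⊤,
        MemLip0 (0 : X) (T a) ∧ lipNorm (T a) = ‖a‖ ∧
        (a ≠ 0 → PointwiseAttains (T a) ∧ LocDirAttains (T a) ∧ ¬ DerAttains (T a)) :=
  linfty_in_PNA_inter_LDirA_not_Der_general
end
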